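/- Let u ∈ V and let (u_h, z_h) ∈ V_h × W_h satisfy the consistent discrete system: a_h(u_h, w) − s_W(z_h, w) = a_h(u, w) for all w ∈ W_h, and a_h(v, z_h) + s_V(u_h, v) = s_V(u, v) for all v ∈ V_h. Let i_V u ∈ V_h be given and set ρ := |(u − i_V u, 0)|_L. Assume the inf-sup stability with constant c_s > 0 (for every (ν, ζ) ∈ V_h × W_h there exists (v, w) ∈ V_h × W_h with |(v, w)|_L ≤ 1 and c_s·|(ν, ζ)|_L ≤ A_h[(ν, ζ), (v, w)]), the continuity bound a_h(u − i_V u, w) ≤ δ·|(0, w)|_L for all w ∈ W_h with δ ≥ 0, and the domination bounds |u − i_V u|_{s_V} ≤ C₁·ρ, |v|_{s_V} ≤ C₁·|(v, w)|_L for all (v, w) ∈ V_h × W_h, and |z_h|_{s_W} ≤ C₁·|(0, z_h)|_L. Assume further that η_V ≥ 0 satisfies η_V ≤ C₂·|(u_h − u, 0)|_L for some C₂ ≥ 0. Then the a posteriori quantity η := η_V + |z_h|_{s_W} satisfies the a priori bound η ≤ (C₁ + C₂)·(ρ + c_s^{-1}·(δ + C₁²·ρ)); in particular, if δ + ρ ≤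 C_V·h^t with C_V ≥ 0, h > 0, t ≥ 1, then η ≤ (C₁ + C₂)·max(1, C₁²)·(1 + c_s^{-1})·C_V·h^t. -/

import Mathlib

/-!
Subtracting the discrete system from itself tested at the interpolant shows that the discrete
error `(u_h - i_V u, z_h)` is driven only by the consistency functional
`(v, w) ↦ a_h(u - i_V u, w) + s_V(u - i_V u, v)`, which is at most `δ + C₁² ρ` on the unit
ball of `|·|_L` (Cauchy–Schwarz for `s_V`). Inf-sup stability then bounds the discrete error by
`c_s⁻¹ (δ + C₁² ρ)`, and both parts of `η` are controlled by the discrete error plus `ρ`.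
-/

theorem LinearMap.BilinForm.apply_le_sqrt_mul_sqrt {M : Type*} [AddCommGroup M] [Module ℝ M]
    (B : LinearMap.BilinForm ℝ M) (hs : ∀ x, 0 ≤ B x x) (hB : LinearMap.IsSymm B) (x y : M) :
    B x y ≤ √(B x x) * √(B y y) :=
  calc B x y ≤ |B x y| := le_abs_self _
    _ ≤ √(B x x * B y y) := Real.abs_le_sqrt (B.apply_sq_le_of_symm hs hB x y)
    _ = √(B x x) * √(B y y) := Real.sqrt_mul (hs x) _

theorem Seminorm.apply_sub_zero_le {V W : Type*} [AddCommGroup V] [Module ℝ V]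
    [AddCommGroup W] [Module ℝ W] (L : Seminorm ℝ (V × W))
    (hL₁ : ∀ (v : V) (w : W), L (v, (0 : W)) ≤ L (v, w)) (x y z : V) (ζ : W) :
    L (x - y, (0 : W)) ≤ L (x - z, ζ) + L (y - z, (0 : W)) :=
  calc L (x - y, (0 : W)) = L ((x - z, (0 : W)) - (y - z, (0 : W))) := by simp
    _ ≤ L (x - z, (0 : W)) + L (y - z, (0 : W)) := map_sub_le_add L _ _
    _ ≤ L (x - z, ζ) + L (y - z, (0 : W)) := by gcongr; exact hL₁ _ _

section SaddlePoint

variable {V W : Type*} [AddCommGroup V] [Module ℝ V] [AddCommGroup W] [Module ℝ W]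
  (ah : V →ₗ[ℝ] W →ₗ[ℝ] ℝ) (sV : V →ₗ[ℝ] V →ₗ[ℝ] ℝ) (sW : W →ₗ[ℝ] W →ₗ[ℝ] ℝ)

/-- The saddle-point form `A_h[(ν, ζ), (v, w)]`. -/
def saddleForm (ν : V) (ζ : W) (v : V) (w : W) : ℝ :=
  ah ν w - sW ζ w + ah v ζ + sV ν v

theorem saddleForm_sub_eq_of_consistent {u uh iVu v : V} {zh w : W}
    (heq1 : ah uh w - sW zh w = ah u w) (heq2 : ah v zh + sV uh v = sV u v) :
    saddleForm ah sV sW (uh - iVu) zh v w = ah (u - iVu) w + sV (u - iVu) v := by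
  simp only [saddleForm, map_sub, LinearMap.sub_apply]
  linarith

theorem mul_seminorm_discreteError_le (hsVsymm : ∀ v₁ v₂ : V, sV v₁ v₂ = sV v₂ v₁)
    (hsVpos : ∀ v : V, 0 ≤ sV v v) (L : Seminorm ℝ (V × W))
    (hL₂ : ∀ (v : V) (w : W), L ((0 : V), w) ≤ L (v, w))
    {Vh : Submodule ℝ V} {Wh : Submodule ℝ W} {u uh iVu : V} {zh : W}
    (huh : uh ∈ Vh) (hzh : zh ∈ Wh) (hiVu : iVu ∈ Vh)
    (heq1 : ∀ w ∈ Wh, ah uh w - sW zh w = ah u w)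
    (heq2 : ∀ v ∈ Vh, ah v zh + sV uh v = sV u v)
    {cs : ℝ} (hinfsup : ∀ ν ∈ Vh, ∀ ζ ∈ Wh, ∃ v ∈ Vh, ∃ w ∈ Wh,
      L (v, w) ≤ 1 ∧ cs * L (ν, ζ) ≤ saddleForm ah sV sW ν ζ v w)
    {δ : ℝ} (hδ : 0 ≤ δ) (hcont : ∀ w ∈ Wh, ah (u - iVu) w ≤ δ * L ((0 : V), w))
    {C₁ ρ : ℝ} (hC₁ : 0 ≤ C₁) (hdom1 : √(sV (u - iVu) (u - iVu)) ≤ C₁ * ρ)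
    (hdom2 : ∀ v ∈ Vh, ∀ w ∈ Wh, √(sV v v) ≤ C₁ * L (v, w)) :
    cs * L (uh - iVu, zh) ≤ δ + C₁ ^ 2 * ρ := by
  obtain ⟨v, hv, w, hw, hvw, hstab⟩ := hinfsup _ (Vh.sub_mem huh hiVu) zh hzh
  have ha : ah (u - iVu) w ≤ δ :=
    (hcont w hw).trans (mul_le_of_le_one_right hδ ((hL₂ v w).trans hvw))
  have hsv : √(sV v v) ≤ C₁ := (hdom2 v hv w hw).trans (mul_le_of_le_one_right hC₁ hvw)
  have hs : sV (u - iVu) v ≤ C₁ ^ 2 * ρ :=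
    calc sV (u - iVu) v ≤ √(sV (u - iVu) (u - iVu)) * √(sV v v) :=
          LinearMap.BilinForm.apply_le_sqrt_mul_sqrt sV hsVpos ⟨hsVsymm⟩ _ _
      _ ≤ C₁ * ρ * C₁ :=
          mul_le_mul hdom1 hsv (Real.sqrt_nonneg _) ((Real.sqrt_nonneg _).trans hdom1)
      _ = C₁ ^ 2 * ρ := by ring
  calc cs * L (uh - iVu, zh) ≤ saddleForm ah sV sW (uh - iVu) zh v w := hstab
    _ = ah (u - iVu) w + sV (u - iVu) v :=
        saddleForm_sub_eq_of_consistent ah sV sW (heq1 w hw) (heq2 v hv)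
    _ ≤ δ + C₁ ^ 2 * ρ := add_le_add ha hs

end SaddlePoint

theorem add_mul_add_sq_mul_le_max_mul {ρ δ c C K : ℝ} (hρ : 0 ≤ ρ) (hδ : 0 ≤ δ) (hc : 0 ≤ c)
    (hK : δ + ρ ≤ K) : ρ + c * (δ + C ^ 2 * ρ) ≤ max 1 (C ^ 2) * (1 + c) * K := by
  have h1 : 1 ≤ max 1 (C ^ 2) := le_max_left _ _
  have h2 : C ^ 2 ≤ max 1 (C ^ 2) := le_max_right _ _
  have hρK : ρ ≤ max 1 (C ^ 2) * K := by nlinarith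
  have hδK : δ + C ^ 2 * ρ ≤ max 1 (C ^ 2) * K := by nlinarith
  nlinarith [mul_le_mul_of_nonneg_left hδK hc]
theorem apriori_bound_for_aposteriori_quantity_general
    {V W : Type*} [NormedAddCommGroup V] [NormedSpace ℝ V]
    [NormedAddCommGroup W] [NormedSpace ℝ W]
    (Vh : Submodule ℝ V) (Wh : Submodule ℝ W)
    (ah : V →ₗ[ℝ] W →ₗ[ℝ] ℝ)
    (sV : V →ₗ[ℝ] V →ₗ[ℝ] ℝ) (sW : W →ₗ[ℝ] W →ₗ[ℝ] ℝ)
    (hsVsymm : ∀ v₁ v₂ : V, sV v₁ v₂ = sV v₂ v₁)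
    (hsVpos : ∀ v : V, 0 ≤ sV v v)
    (L : Seminorm ℝ (V × W))
    (hL₁ : ∀ (v : V) (w : W), L (v, (0 : W)) ≤ L (v, w))
    (hL₂ : ∀ (v : V) (w : W), L ((0 : V), w) ≤ L (v, w))
    (u : V) (uh : V) (zh : W) (huh : uh ∈ Vh) (hzh : zh ∈ Wh)
    -- the consistent discrete system
    (heq1 : ∀ w ∈ Wh, ah uh w - sW zh w = ah u w)
    (heq2 : ∀ v ∈ Vh, ah v zh + sV uh v = sV u v)
    (iVu : V) (hiVu : iVu ∈ Vh)
    (ρ : ℝ) (hρ : ρ = L (u - iVu, (0 : W)))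
    -- inf-sup stability
    (cs : ℝ) (hcs : 0 < cs)
    (hinfsup : ∀ ν ∈ Vh, ∀ ζ ∈ Wh, ∃ v ∈ Vh, ∃ w ∈ Wh,
      L (v, w) ≤ 1 ∧ cs * L (ν, ζ) ≤ ah ν w - sW ζ w + ah v ζ + sV ν v)
    -- continuity
    (δ : ℝ) (hδ : 0 ≤ δ)
    (hcont : ∀ w ∈ Wh, ah (u - iVu) w ≤ δ * L ((0 : V), w))
    -- domination
    (C₁ : ℝ) (hC₁ : 0 ≤ C₁)
    (hdom1 : Real.sqrt (sV (u - iVu) (u - iVu)) ≤ C₁ * ρ)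
    (hdom2 : ∀ v ∈ Vh, ∀ w ∈ Wh, Real.sqrt (sV v v) ≤ C₁ * L (v, w))
    (hdom3 : Real.sqrt (sW zh zh) ≤ C₁ * L ((0 : V), zh))
    -- the a posteriori quantity is dominated by the error in the L-seminorm
    (ηV : ℝ)
    (C₂ : ℝ) (hC₂ : 0 ≤ C₂)
    (hηVbound : ηV ≤ C₂ * L (uh - u, (0 : W))) :
    ηV + Real.sqrt (sW zh zh) ≤ (C₁ + C₂) * (ρ + cs⁻¹ * (δ + C₁ ^ 2 * ρ)) ∧
      ∀ CV h t : ℝ, 0 ≤ CV → 0 < h → 1 ≤ t → δ + ρ ≤ CV * h ^ t →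
        ηV + Real.sqrt (sW zh zh) ≤
          (C₁ + C₂) * max 1 (C₁ ^ 2) * (1 + cs⁻¹) * CV * h ^ t := by
  have hρ0 : 0 ≤ ρ := hρ ▸ apply_nonneg L _
  have hE : L (uh - iVu, zh) ≤ cs⁻¹ * (δ + C₁ ^ 2 * ρ) := by
    rw [le_inv_mul_iff₀ hcs]
    exact mul_seminorm_discreteError_le ah sV sW hsVsymm hsVpos L hL₂ huh hzh hiVu heq1 heq2
      hinfsup hδ hcont hC₁ hdom1 hdom2
  have hη : ηV + √(sW zh zh) ≤ (C₁ + C₂) * (ρ + L (uh - iVu, zh)) := by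
    have hηV_le : ηV ≤ C₂ * (L (uh - iVu, zh) + ρ) := hηVbound.trans <|
      mul_le_mul_of_nonneg_left (hρ ▸ L.apply_sub_zero_le hL₁ uh u iVu zh) hC₂
    have hsW_le : √(sW zh zh) ≤ C₁ * L (uh - iVu, zh) :=
      hdom3.trans (mul_le_mul_of_nonneg_left (hL₂ _ _) hC₁)
    nlinarith [mul_nonneg hC₁ hρ0]
  have main : ηV + √(sW zh zh) ≤ (C₁ + C₂) * (ρ + cs⁻¹ * (δ + C₁ ^ 2 * ρ)) :=
    hη.trans (mul_le_mul_of_nonneg_left (add_le_add_right hE ρ) (by positivity))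
  refine ⟨main, fun CV h t _ _ _ hrate => main.trans ?_⟩
  calc (C₁ + C₂) * (ρ + cs⁻¹ * (δ + C₁ ^ 2 * ρ))
      ≤ (C₁ + C₂) * (max 1 (C₁ ^ 2) * (1 + cs⁻¹) * (CV * h ^ t)) :=
        mul_le_mul_of_nonneg_left
          (add_mul_add_sq_mul_le_max_mul hρ0 hδ (inv_nonneg.mpr hcs.le) hrate) (by positivity)
    _ = (C₁ + C₂) * max 1 (C₁ ^ 2) * (1 + cs⁻¹) * CV * h ^ t := by ring

/-- A priori bound for the a posteriori quantity `η = η_V + |z_h|_{s_W}`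
(equation (24) of the paper, abstract form). -/
theorem apriori_bound_for_aposteriori_quantity
    {V W : Type*} [NormedAddCommGroup V] [NormedSpace ℝ V]
    [NormedAddCommGroup W] [NormedSpace ℝ W]
    (Vh : Submodule ℝ V) (Wh : Submodule ℝ W)
    (ah : V →ₗ[ℝ] W →ₗ[ℝ] ℝ)
    (sV : V →ₗ[ℝ] V →ₗ[ℝ] ℝ) (sW : W →ₗ[ℝ] W →ₗ[ℝ] ℝ)
    (hsVsymm : ∀ v₁ v₂ : V, sV v₁ v₂ = sV v₂ v₁)
    (hsVpos : ∀ v : V, 0 ≤ sV v v)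
    (hsWsymm : ∀ w₁ w₂ : W, sW w₁ w₂ = sW w₂ w₁)
    (hsWpos : ∀ w : W, 0 ≤ sW w w)
    (L : Seminorm ℝ (V × W))
    (hL₁ : ∀ (v : V) (w : W), L (v, (0 : W)) ≤ L (v, w))
    (hL₂ : ∀ (v : V) (w : W), L ((0 : V), w) ≤ L (v, w))
    (u : V) (uh : V) (zh : W) (huh : uh ∈ Vh) (hzh : zh ∈ Wh)
    -- the consistent discrete system
    (heq1 : ∀ w ∈ Wh, ah uh w - sW zh w = ah u w)
    (heq2 : ∀ v ∈ Vh, ah v zh + sV uh v = sV u v)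
    (iVu : V) (hiVu : iVu ∈ Vh)
    (ρ : ℝ) (hρ : ρ = L (u - iVu, (0 : W)))
    -- inf-sup stability
    (cs : ℝ) (hcs : 0 < cs)
    (hinfsup : ∀ ν ∈ Vh, ∀ ζ ∈ Wh, ∃ v ∈ Vh, ∃ w ∈ Wh,
      L (v, w) ≤ 1 ∧ cs * L (ν, ζ) ≤ ah ν w - sW ζ w + ah v ζ + sV ν v)
    -- continuity
    (δ : ℝ) (hδ : 0 ≤ δ)
    (hcont : ∀ w ∈ Wh, ah (u - iVu) w ≤ δ * L ((0 : V), w))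
    -- domination
    (C₁ : ℝ) (hC₁ : 0 ≤ C₁)
    (hdom1 : Real.sqrt (sV (u - iVu) (u - iVu)) ≤ C₁ * ρ)
    (hdom2 : ∀ v ∈ Vh, ∀ w ∈ Wh, Real.sqrt (sV v v) ≤ C₁ * L (v, w))
    (hdom3 : Real.sqrt (sW zh zh) ≤ C₁ * L ((0 : V), zh))
    -- the a posteriori quantity is dominated by the error in the L-seminorm
    (ηV : ℝ) (hηV : 0 ≤ ηV)
    (C₂ : ℝ) (hC₂ : 0 ≤ C₂)
    (hηVbound : ηV ≤ C₂ * L (uh - u, (0 : W))) :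
    ηV + Real.sqrt (sW zh zh) ≤ (C₁ + C₂) * (ρ + cs⁻¹ * (δ + C₁ ^ 2 * ρ)) ∧
      ∀ CV h t : ℝ, 0 ≤ CV → 0 < h → 1 ≤ t → δ + ρ ≤ CV * h ^ t →
        ηV + Real.sqrt (sW zh zh) ≤
          (C₁ + C₂) * max 1 (C₁ ^ 2) * (1 + cs⁻¹) * CV * h ^ t :=
  apriori_bound_for_aposteriori_quantity_general Vh Wh ah sV sW hsVsymm hsVpos L hL₁ hL₂ u uh zh huh
    hzh heq1 heq2 iVu hiVu ρ hρ cs hcs hinfsup δ hδ hcont C₁ hC₁ hdom1 hdom2 hdom3 ηV C₂ hC₂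
    hηVbound
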